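/- arXiv:2307.09643 — 2 statements merged into one kernel-verified Lean document; each statement's English description precedes it below -/
import Mathlib

section
/- For every natural number x ≥ 2, ∑_{k=1}^{x} φ(k)/k ≥ (6/π²)·x − ln(x) − 1, where φ is Euler's totient function. -/
open Finset

lemma aux_hasSum :
    HasSum (fun d : ℕ => (ArithmeticFunction.moebius d : ℝ) / (d : ℝ) ^ 2)
      (6 / Real.pi ^ 2) := by
  have h2 : (1 : ℝ) < (2 : ℂ).re := by norm_num
  have hsum : LSeriesSummable (fun n => (ArithmeticFunction.moebius n : ℂ)) 2 :=
    ArithmeticFunction.LSeriesSummable_moebius_iff.mpr h2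
  have hmul := ArithmeticFunction.LSeries_zeta_mul_Lseries_moebius (s := 2) h2
  rw [ArithmeticFunction.LSeries_zeta_eq_riemannZeta h2, riemannZeta_two] at hmul
  have hpi : (Real.pi : ℂ) ≠ 0 := by exact_mod_cast Real.pi_ne_zero
  have hL : LSeries (fun n => (ArithmeticFunction.moebius n : ℂ)) 2
      = ((6 / Real.pi ^ 2 : ℝ) : ℂ) := by
    push_cast
    field_simp at hmul ⊢
    linear_combination hmul
  have hhs : HasSum (LSeries.term (fun n => (ArithmeticFunction.moebius n : ℂ)) 2)
      (((6 / Real.pi ^ 2 : ℝ) : ℂ)) := hL ▸ hsum.hasSum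
  rw [← Complex.hasSum_ofReal]
  convert hhs using 2 with n
  rcases eq_or_ne n 0 with rfl | hn
  · simp [LSeries.term]
  · rw [LSeries.term_of_ne_zero hn]
    have : ((n : ℂ) ^ (2 : ℂ)) = ((n : ℂ) ^ (2 : ℕ)) := by
      rw [show ((2:ℂ)) = ((2:ℕ):ℂ) by norm_num, Complex.cpow_natCast]
    rw [this]
    push_cast
    ring

lemma aux_totient_div (n : ℕ) (hn : 0 < n) :
    (Nat.totient n : ℝ) / n = ∑ d ∈ n.divisors, (ArithmeticFunction.moebius d : ℝ) / d := by
  have key := (ArithmeticFunction.sum_eq_iff_sum_mul_moebius_eq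
      (f := fun m => (Nat.totient m : ℝ)) (g := fun m => (m : ℝ))).mp
      (fun m _ => by exact_mod_cast congrArg (Nat.cast : ℕ → ℝ) (Nat.sum_totient m)) n hn
  rw [← key, Nat.sum_divisorsAntidiagonal
    (f := fun d m => (ArithmeticFunction.moebius d : ℝ) * m), sum_div]
  refine sum_congr rfl fun d hd => ?_
  obtain ⟨hdvd, hne⟩ := Nat.mem_divisors.mp hd
  have hd0 : 0 < d := Nat.pos_of_mem_divisors hd
  rw [Nat.cast_div hdvd (by exact_mod_cast hd0.ne')]
  have h1 : (d : ℝ) ≠ 0 := by exact_mod_cast hd0.ne'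
  have h2 : (n : ℝ) ≠ 0 := by exact_mod_cast hn.ne'
  field_simp

lemma aux_swap (x : ℕ) (f : ℕ → ℝ) :
    ∑ k ∈ Icc 1 x, ∑ d ∈ Nat.divisors k, f d
      = ∑ d ∈ Icc 1 x, ((x / d : ℕ) : ℝ) * f d := by
  have hdiv : ∀ k ∈ Icc 1 x, ∑ d ∈ Nat.divisors k, f d
      = ∑ d ∈ Icc 1 x, if d ∣ k then f d else 0 := by
    intro k hk
    rw [mem_Icc] at hk
    rw [← sum_filter]
    congr 1
    ext d
    simp only [Nat.mem_divisors, mem_filter, mem_Icc]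
    constructor
    · rintro ⟨hd, hk0⟩
      have hdk := Nat.le_of_dvd (by omega) hd
      have : d ≠ 0 := by rintro rfl; exact hk0 (Nat.zero_dvd.mp hd)
      exact ⟨⟨by omega, by omega⟩, hd⟩
    · rintro ⟨_, hd⟩; exact ⟨hd, by omega⟩
  rw [sum_congr rfl hdiv, sum_comm]
  refine sum_congr rfl fun d _ => ?_
  rw [← sum_filter, sum_const, nsmul_eq_mul]
  congr 2
  rw [show Icc 1 x = Ioc 0 x from by ext; simp; omega]
  exact Nat.Ioc_filter_dvd_card_eq_div x d

lemma aux_tail (x : ℕ) (hx : 2 ≤ x) :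
    6 / Real.pi ^ 2 - 1 / x
      ≤ ∑ d ∈ Icc 1 x, (ArithmeticFunction.moebius d : ℝ) / (d : ℝ) ^ 2 := by
  set f : ℕ → ℝ := fun d => (ArithmeticFunction.moebius d : ℝ) / (d : ℝ) ^ 2 with hf
  have hsum : Summable f := aux_hasSum.summable
  have hsplit := hsum.sum_add_tsum_nat_add (x + 1)
  rw [aux_hasSum.tsum_eq] at hsplit
  -- partial sum over range (x+1) equals sum over Icc 1 x
  have hpart : ∑ i ∈ range (x + 1), f i = ∑ d ∈ Icc 1 x, f d := by
    refine (sum_subset ?_ ?_).symm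
    · intro d hd; rw [mem_Icc] at hd; rw [mem_range]; omega
    · intro d hd hd'
      rw [mem_range] at hd; rw [mem_Icc] at hd'
      have : d = 0 := by omega
      simp [this, hf]
  -- bound on the tail
  have hg : Summable (fun i : ℕ => (((i + (x+1) : ℕ) : ℝ) ^ 2)⁻¹) := by
    have := (summable_nat_add_iff (f := fun n : ℕ => ((n : ℝ) ^ 2)⁻¹) (x+1)).mpr ?_
    · exact_mod_cast this
    · simpa using Real.summable_one_div_nat_pow.mpr one_lt_two
  have htail_le : ∑' i : ℕ, (((i + (x+1) : ℕ) : ℝ) ^ 2)⁻¹ ≤ 1 / x := by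
    refine Summable.tsum_le_of_sum_le hg fun s => ?_
    rcases s.eq_empty_or_nonempty with rfl | hs
    · simp
    obtain ⟨N, hN⟩ : ∃ N, s ⊆ range N := ⟨s.max' hs + 1, fun i hi =>
      mem_range.mpr (Nat.lt_succ_of_le (s.le_max' i hi))⟩
    calc ∑ i ∈ s, (((i + (x+1) : ℕ) : ℝ) ^ 2)⁻¹
        ≤ ∑ i ∈ range N, (((i + (x+1) : ℕ) : ℝ) ^ 2)⁻¹ :=
          sum_le_sum_of_subset_of_nonneg hN (fun i _ _ => by positivity)
      _ = ∑ d ∈ Ioc x (x + N), ((d : ℝ) ^ 2)⁻¹ := by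
          rw [show Ioc x (x + N) = Ico (x+1) (x + N + 1) from by ext; simp,
            Finset.sum_Ico_eq_sum_range]
          refine sum_congr (by congr 1; omega) fun i _ => by rw [Nat.add_comm i (x+1)]
      _ ≤ ((x:ℝ))⁻¹ - (((x + N : ℕ) : ℝ))⁻¹ := sum_Ioc_inv_sq_le_sub (by omega) (by omega)
      _ ≤ 1 / x := by
          rw [one_div]
          have : (0:ℝ) ≤ (((x + N : ℕ) : ℝ))⁻¹ := by positivity
          linarith
  have hfs : Summable fun i : ℕ => |f (i + (x+1))| :=
    ((summable_nat_add_iff (x+1)).mpr hsum).abs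
  have hterm : ∀ i : ℕ, |f (i + (x+1))| ≤ (((i + (x+1) : ℕ) : ℝ) ^ 2)⁻¹ := by
    intro i
    have hj : (0:ℝ) < ((i + (x+1) : ℕ) : ℝ) ^ 2 := by
      have : (0:ℝ) < ((i + (x+1) : ℕ) : ℝ) := by exact_mod_cast Nat.succ_le_iff.mp (by omega)
      positivity
    have h1 : |(ArithmeticFunction.moebius (i + (x+1)) : ℝ)| ≤ 1 := by
      exact_mod_cast ArithmeticFunction.abs_moebius_le_one
    rw [hf, abs_div, abs_pow, Nat.abs_cast, ← one_div, div_le_div_iff₀ hj hj, one_mul]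
    nlinarith
  have habs : |∑' i : ℕ, f (i + (x+1))| ≤ 1 / x := by
    calc |∑' i : ℕ, f (i + (x+1))|
        ≤ ∑' i : ℕ, |f (i + (x+1))| := by
          simpa [Real.norm_eq_abs] using
            norm_tsum_le_tsum_norm (f := fun i : ℕ => f (i + (x+1)))
              (by simpa [Real.norm_eq_abs] using hfs)
      _ ≤ ∑' i : ℕ, (((i + (x+1) : ℕ) : ℝ) ^ 2)⁻¹ := Summable.tsum_le_tsum hterm hfs hg
      _ ≤ 1 / x := htail_le
  have := abs_le.mp habs
  have hxpos : (0:ℝ) < x := by positivity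
  rw [hpart] at hsplit
  linarith

theorem stmt_12 (x : ℕ) (hx : 2 ≤ x) :
    (6 / Real.pi ^ 2) * x - Real.log x - 1
      ≤ ∑ k ∈ Finset.Icc 1 x, (Nat.totient k : ℝ) / k := by
  have hx0 : (0:ℝ) < x := by exact_mod_cast Nat.lt_of_lt_of_le Nat.zero_lt_two hx
  have h1 : ∑ k ∈ Icc 1 x, (Nat.totient k : ℝ) / k
      = ∑ d ∈ Icc 1 x, ((x / d : ℕ) : ℝ) * ((ArithmeticFunction.moebius d : ℝ) / d) := by
    rw [← aux_swap]
    exact sum_congr rfl fun k hk => aux_totient_div k (by rw [mem_Icc] at hk; omega)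
  have hterm : ∀ d ∈ Icc 1 x,
      (x:ℝ) * ((ArithmeticFunction.moebius d : ℝ) / (d:ℝ)^2)
          - (if d = 1 then 0 else 1/(d:ℝ))
        ≤ ((x / d : ℕ) : ℝ) * ((ArithmeticFunction.moebius d : ℝ) / d) := by
    intro d hd
    rw [mem_Icc] at hd
    rcases eq_or_ne d 1 with rfl | hd1
    · simp
    · have hd2 : 2 ≤ d := by omega
      set m : ℝ := (ArithmeticFunction.moebius d : ℝ) with hm_def
      have hm : |m| ≤ 1 := by
        rw [hm_def]; exact_mod_cast ArithmeticFunction.abs_moebius_le_one (n := d)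
      obtain ⟨hm1, hm2⟩ := abs_le.mp hm
      have hdR : (2:ℝ) ≤ (d:ℝ) := by exact_mod_cast hd2
      have hd0 : (0:ℝ) < (d:ℝ) := by linarith
      set q : ℝ := ((x / d : ℕ) : ℝ) with hq_def
      have hxeq : (x:ℝ) = (d:ℝ) * q + ((x % d : ℕ):ℝ) := by
        rw [hq_def]; exact_mod_cast (Nat.div_add_mod x d).symm
      have hmod : ((x % d : ℕ):ℝ) < (d:ℝ) := by
        exact_mod_cast Nat.mod_lt x (show 0 < d by omega)
      have hs0 : (0:ℝ) ≤ ((x % d : ℕ):ℝ) := by positivity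
      rw [if_neg hd1]
      have key : (x:ℝ) * m - d ≤ q * m * d := by
        rcases le_or_gt 0 m with hm0 | hm0
        · nlinarith [mul_le_mul_of_nonneg_left hm2 hs0]
        · nlinarith [mul_nonneg hs0 (neg_nonneg.mpr hm0.le)]
      calc (x:ℝ) * (m/(d:ℝ)^2) - 1/d = ((x:ℝ)*m - d)/(d:ℝ)^2 := by field_simp
        _ ≤ (q*m*(d:ℝ))/(d:ℝ)^2 := by
            exact div_le_div_of_nonneg_right key (by positivity) |>.trans_eq rfl
        _ = q * (m/(d:ℝ)) := by field_simp
  have hsum_ge := sum_le_sum hterm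
  rw [sum_sub_distrib] at hsum_ge
  have hA : ∑ d ∈ Icc 1 x, (x:ℝ) * ((ArithmeticFunction.moebius d : ℝ) / (d:ℝ)^2)
      = (x:ℝ) * ∑ d ∈ Icc 1 x, (ArithmeticFunction.moebius d : ℝ) / (d:ℝ)^2 := by
    rw [mul_sum]
  have hP := aux_tail x hx
  have hAP : (x:ℝ) * (6 / Real.pi ^ 2) - 1
      ≤ (x:ℝ) * ∑ d ∈ Icc 1 x, (ArithmeticFunction.moebius d : ℝ) / (d:ℝ)^2 := by
    have h := mul_le_mul_of_nonneg_left hP hx0.le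
    have : (x:ℝ) * (6 / Real.pi ^ 2 - 1/x) = (x:ℝ) * (6 / Real.pi ^ 2) - 1 := by
      field_simp
    linarith
  -- error sum ≤ log x
  have h1mem : (1:ℕ) ∈ Icc 1 x := by rw [mem_Icc]; omega
  have hEeq : ∑ d ∈ Icc 1 x, (if d = 1 then 0 else 1/(d:ℝ))
      = (∑ d ∈ Icc 1 x, 1/(d:ℝ)) - 1 := by
    have hins : Icc 1 x = insert 1 (Icc 2 x) := by ext d; rw [mem_insert, mem_Icc, mem_Icc]; omega
    rw [hins, sum_insert (by rw [mem_Icc]; omega), sum_insert (by rw [mem_Icc]; omega),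
      if_pos rfl,
      sum_congr rfl (fun d hd => if_neg (by rw [mem_Icc] at hd; omega))]
    norm_num
  have hH : (∑ d ∈ Icc 1 x, 1/(d:ℝ)) ≤ 1 + Real.log x := by
    have h := harmonic_le_one_add_log x
    rw [harmonic_eq_sum_Icc] at h
    push_cast at h
    simpa [one_div] using h
  have hE : ∑ d ∈ Icc 1 x, (if d = 1 then 0 else 1/(d:ℝ)) ≤ Real.log x := by
    rw [hEeq]; linarith
  rw [h1]
  rw [hA] at hsum_ge
  nlinarith [hsum_ge, hAP, hE]
end

section
/- For every natural number x ≥ 2, ∑_{k=1}^{x} φ(k) ≤ (3/π²)·x² + (3/2)·x·(ln(x) + 1) + x²/(2(x−1)), where φ is Euler's totient function. -/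
open Finset ArithmeticFunction LSeries.notation Real
open scoped ArithmeticFunction.Moebius

lemma summable_moebius_div_sq : Summable (fun n : ℕ => (μ n : ℝ) / (n : ℝ) ^ 2) := by
  have h : Summable (fun n : ℕ => 1 / (n : ℝ) ^ 2) :=
    Real.summable_one_div_nat_pow.mpr one_lt_two
  refine Summable.of_norm_bounded h (fun n => ?_)
  rcases eq_or_ne n 0 with rfl | hn
  · simp
  · rw [Real.norm_eq_abs, abs_div, abs_of_nonneg (by positivity : (0:ℝ) ≤ (n:ℝ)^2)]
    apply div_le_div_of_nonneg_right ?_ (by positivity)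
    · calc |(μ n : ℝ)| = |(μ n : ℤ)| := by push_cast [Int.cast_abs]; ring
        _ ≤ 1 := by exact_mod_cast abs_moebius_le_one

lemma hasSum_moebius_div_sq :
    HasSum (fun n : ℕ => (μ n : ℝ) / (n : ℝ) ^ 2) (6 / Real.pi ^ 2) := by
  have hsum : LSeriesSummable ↗μ 2 := LSeriesSummable_moebius_iff.mpr (by norm_num)
  have hpi : ((Real.pi : ℂ)) ^ 2 ≠ 0 := by
    simpa using Complex.ofReal_ne_zero.mpr Real.pi_ne_zero
  have hval : LSeries ↗μ 2 = ((6 / Real.pi ^ 2 : ℝ) : ℂ) := by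
    have h1 := LSeries_zeta_mul_Lseries_moebius (s := 2) (by norm_num)
    rw [LSeries_zeta_eq_riemannZeta (by norm_num), riemannZeta_two] at h1
    push_cast
    rw [eq_div_iff hpi]
    field_simp at h1
    linear_combination h1
  have hterm : LSeries.term ↗μ 2
      = fun n : ℕ => (((μ n : ℝ) / (n : ℝ) ^ 2 : ℝ) : ℂ) := by
    funext n
    rcases eq_or_ne n 0 with rfl | hn
    · simp [LSeries.term]
    · rw [LSeries.term_of_ne_zero hn]
      push_cast
      norm_num
  have h2 : HasSum (fun n : ℕ => (((μ n : ℝ) / (n : ℝ) ^ 2 : ℝ) : ℂ))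
      ((6 / Real.pi ^ 2 : ℝ) : ℂ) := by
    have h := hsum.hasSum
    rw [show (∑' n, LSeries.term ↗μ 2 n) = LSeries ↗μ 2 from rfl, hval, hterm] at h
    exact h
  have h3 := h2.mapL Complex.reCLM
  simpa only [Complex.reCLM_apply, Complex.ofReal_re] using h3

lemma abs_moebius_div_sq_le (n : ℕ) : |(μ n : ℝ) / (n : ℝ) ^ 2| ≤ 1 / (n : ℝ) ^ 2 := by
  rcases eq_or_ne n 0 with rfl | hn
  · simp
  · rw [abs_div, abs_of_nonneg (by positivity : (0:ℝ) ≤ (n:ℝ)^2)]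
    have h1 : |((μ n : ℤ) : ℝ)| ≤ 1 := by exact_mod_cast abs_moebius_le_one (n := n)
    have h2 : (0:ℝ) < (n:ℝ)^2 := by positivity
    gcongr

lemma partial_moebius_le (x : ℕ) (hx : 2 ≤ x) :
    ∑ d ∈ Icc 1 x, (μ d : ℝ) / (d : ℝ) ^ 2 ≤ 6 / Real.pi ^ 2 + 1 / x := by
  have hx0 : (0:ℝ) < x := by positivity
  set f : ℕ → ℝ := fun n => (μ n : ℝ) / (n : ℝ) ^ 2 with hf
  have hs := summable_moebius_div_sq
  have key := Summable.sum_add_tsum_nat_add (f := f) (x + 1) hs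
  have htsum : ∑' n, f n = 6 / Real.pi ^ 2 := hasSum_moebius_div_sq.tsum_eq
  have hIcc : ∑ d ∈ Icc 1 x, f d = ∑ d ∈ range (x + 1), f d := by
    have h0 : range (x + 1) = insert 0 (Icc 1 x) := by
      ext n; simp [Nat.lt_succ_iff]; omega
    rw [h0, Finset.sum_insert (by simp)]
    simp [hf]
  have hns : Summable (fun n => f (n + (x+1))) := (summable_nat_add_iff _).mpr hs
  have htail : |∑' n, f (n + (x + 1))| ≤ 1 / x := by
    calc |∑' n, f (n + (x+1))| ≤ ∑' n, ‖f (n + (x+1))‖ := by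
          simpa using norm_tsum_le_tsum_norm hns.norm
      _ ≤ 1 / x := by
          apply Real.tsum_le_of_sum_range_le (fun n => norm_nonneg _)
          intro N
          have step : ∀ n ∈ range N, ‖f (n + (x+1))‖
              ≤ 1 / ((n:ℝ) + x) - 1 / (((n+1:ℕ):ℝ) + x) := by
            intro n _
            have ha : (0:ℝ) < (n:ℝ) + x := by positivity
            have h1 : ‖f (n + (x+1))‖ ≤ 1 / ((n:ℝ) + x + 1) ^ 2 := by
              have := abs_moebius_div_sq_le (n + (x+1))
              rw [hf, Real.norm_eq_abs]
              convert this using 3 <;> push_cast <;> ring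
            have h2 : 1 / ((n:ℝ) + x + 1) ^ 2 ≤ 1 / (((n:ℝ) + x) * ((n:ℝ) + x + 1)) := by
              apply one_div_le_one_div_of_le (by positivity)
              nlinarith
            have h3 : 1 / (((n:ℝ) + x) * ((n:ℝ) + x + 1))
                = 1 / ((n:ℝ) + x) - 1 / (((n+1:ℕ):ℝ) + x) := by
              push_cast
              rw [div_sub_div _ _ (ne_of_gt ha) (by positivity)]
              ring_nf
            linarith
          calc ∑ n ∈ range N, ‖f (n + (x+1))‖
              ≤ ∑ n ∈ range N, (1 / ((n:ℝ) + x) - 1 / (((n+1:ℕ):ℝ) + x)) :=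
                Finset.sum_le_sum step
            _ = 1 / ((0:ℕ) + (x:ℝ)) - 1 / ((N:ℝ) + x) := by
                rw [Finset.sum_range_sub' (f := fun n : ℕ => 1 / ((n:ℝ) + x))]
            _ ≤ 1 / x := by
                simp only [Nat.cast_zero, zero_add]
                have : (0:ℝ) ≤ 1 / ((N:ℝ) + x) := by positivity
                linarith
  have habs := abs_le.mp htail
  rw [hIcc]
  linarith [key, htsum]

lemma sum_Icc_divisorsAntidiagonal (x : ℕ) (F : ℕ → ℕ → ℝ) :
    ∑ k ∈ Icc 1 x, ∑ p ∈ k.divisorsAntidiagonal, F p.1 p.2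
      = ∑ d ∈ Icc 1 x, ∑ m ∈ Icc 1 (x / d), F d m := by
  rw [Finset.sum_sigma', Finset.sum_sigma']
  refine Finset.sum_bij' (fun p _ => (⟨p.2.1, p.2.2⟩ : Σ _ : ℕ, ℕ))
    (fun q _ => (⟨q.1 * q.2, (q.1, q.2)⟩ : Σ _ : ℕ, ℕ × ℕ)) ?_ ?_ ?_ ?_ ?_
  · rintro ⟨k, d, m⟩ ha
    simp only [mem_sigma, mem_Icc, Nat.mem_divisorsAntidiagonal] at ha ⊢
    obtain ⟨⟨h1, h2⟩, h3, h4⟩ := ha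
    have hd : 0 < d := by
      rcases Nat.eq_zero_or_pos d with rfl | h
      · simp at h3; omega
      · exact h
    have hm : 0 < m := by
      rcases Nat.eq_zero_or_pos m with rfl | h
      · simp at h3; omega
      · exact h
    refine ⟨⟨hd, ?_⟩, hm, ?_⟩
    · calc d ≤ d * m := Nat.le_mul_of_pos_right d hm
        _ = k := h3
        _ ≤ x := h2
    · rw [Nat.le_div_iff_mul_le hd]
      calc m * d = k := by rw [mul_comm]; exact h3
        _ ≤ x := h2
  · rintro ⟨d, m⟩ hq
    simp only [mem_sigma, mem_Icc, Nat.mem_divisorsAntidiagonal] at hq ⊢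
    obtain ⟨⟨h1, h2⟩, h3, h4⟩ := hq
    refine ⟨⟨?_, ?_⟩, ?_⟩
    · exact Nat.one_le_iff_ne_zero.mpr (Nat.mul_ne_zero (by omega) (by omega))
    · rw [Nat.le_div_iff_mul_le h1] at h4; rw [mul_comm]; exact h4
    · simp only [true_and]
      exact Nat.mul_ne_zero (by omega) (by omega)
  · rintro ⟨k, d, m⟩ ha
    simp only [mem_sigma, mem_Icc, Nat.mem_divisorsAntidiagonal] at ha
    obtain ⟨⟨h1, h2⟩, h3, h4⟩ := ha
    simp only [Sigma.mk.inj_iff]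
    exact ⟨h3, heq_of_eq rfl⟩
  · rintro ⟨d, m⟩ hq
    rfl
  · rintro ⟨k, d, m⟩ ha
    rfl

lemma phi_eq (n : ℕ) (hn : 0 < n) :
    (Nat.totient n : ℝ) = ∑ p ∈ n.divisorsAntidiagonal, (μ p.1 : ℝ) * p.2 := by
  have hyp : ∀ m : ℕ, m > 0 → ∑ i ∈ m.divisors, (Nat.totient i : ℝ) = (m : ℝ) := by
    intro m _
    rw [show ((m : ℝ)) = ((m.divisors.sum Nat.totient : ℕ) : ℝ) by rw [Nat.sum_totient]]
    push_cast
    rfl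
  have h := (sum_eq_iff_sum_smul_moebius_eq (R := ℝ)
      (f := fun n => (Nat.totient n : ℝ)) (g := fun n => (n : ℝ))).mp hyp n hn
  rw [← h]
  exact Finset.sum_congr rfl fun p _ => by rw [zsmul_eq_mul]

set_option maxHeartbeats 1000000 in
lemma phi_sum_eq (x : ℕ) :
    ∑ k ∈ Icc 1 x, (Nat.totient k : ℝ)
      = ∑ d ∈ Icc 1 x, (μ d : ℝ) * ∑ m ∈ Icc 1 (x / d), (m : ℝ) := by
  have s1 : ∑ k ∈ Icc 1 x, (Nat.totient k : ℝ)
      = ∑ k ∈ Icc 1 x, ∑ p ∈ k.divisorsAntidiagonal, (μ p.1 : ℝ) * p.2 := by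
    refine Finset.sum_congr rfl fun k hk => ?_
    have hk1 : 0 < k := by simp only [mem_Icc] at hk; omega
    exact phi_eq k hk1
  have s2 : ∑ k ∈ Icc 1 x, ∑ p ∈ k.divisorsAntidiagonal, (μ p.1 : ℝ) * p.2
      = ∑ d ∈ Icc 1 x, ∑ m ∈ Icc 1 (x / d), (μ d : ℝ) * m :=
    sum_Icc_divisorsAntidiagonal x (fun d m => (μ d : ℝ) * m)
  rw [s1, s2]
  simp [Finset.mul_sum]

lemma sum_Icc_id_real (n : ℕ) : ∑ m ∈ Icc 1 n, (m : ℝ) = (n : ℝ) * ((n : ℝ) + 1) / 2 := by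
  induction n with
  | zero => simp
  | succ n ih =>
    rw [Finset.sum_Icc_succ_top (by omega)]
    push_cast
    rw [ih]
    ring

lemma harmonic_sum_le (x : ℕ) (hx : 1 ≤ x) :
    ∑ d ∈ Icc 1 x, 1 / (d : ℝ) ≤ Real.log x + 1 := by
  have h1 : ∑ d ∈ Icc 1 x, 1 / (d : ℝ) = (harmonic x : ℝ) := by
    rw [harmonic]
    push_cast
    rw [← Finset.Ico_add_one_right_eq_Icc, Finset.sum_Ico_eq_sum_range]
    refine Finset.sum_congr rfl fun i _ => ?_
    push_cast
    rw [one_div, add_comm]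
  rw [h1]
  linarith [harmonic_le_one_add_log x]

theorem stmt_13 (x : ℕ) (hx : 2 ≤ x) :
    ∑ k ∈ Finset.Icc 1 x, (Nat.totient k : ℝ)
      ≤ (3 / Real.pi ^ 2) * (x : ℝ) ^ 2 + (3 / 2) * x * (Real.log x + 1)
        + (x : ℝ) ^ 2 / (2 * ((x : ℝ) - 1)) := by
  have hx2 : (2:ℝ) ≤ (x:ℝ) := by exact_mod_cast hx
  have hx0 : (0:ℝ) < (x:ℝ) := by linarith
  rw [phi_sum_eq]
  -- termwise bound
  have key : ∀ d ∈ Icc 1 x,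
      (μ d : ℝ) * ∑ m ∈ Icc 1 (x / d), (m : ℝ)
        ≤ (x:ℝ)^2 / 2 * ((μ d : ℝ) / (d:ℝ)^2) + (x:ℝ) / (2 * d) := by
    intro d hd
    simp only [mem_Icc] at hd
    have hd0 : (0:ℝ) < (d:ℝ) := by exact_mod_cast hd.1
    set t : ℝ := (x:ℝ) / (d:ℝ) with ht
    have ht0 : 0 < t := by positivity
    set n : ℕ := x / d with hn
    have hnt : (n:ℝ) ≤ t := by
      rw [ht, le_div_iff₀ hd0]
      exact_mod_cast Nat.div_mul_le_self x d
    have htn : t - 1 ≤ (n:ℝ) := by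
      have hmod := Nat.div_add_mod x d
      have hltd : x % d < d := Nat.mod_lt x hd.1
      have h1 : (d:ℝ) * (n:ℝ) + ((x % d : ℕ):ℝ) = (x:ℝ) := by
        rw [hn]; exact_mod_cast hmod
      have h2 : ((x % d : ℕ):ℝ) < (d:ℝ) := by exact_mod_cast hltd
      have h3 : (x:ℝ) ≤ ((n:ℝ)+1)*(d:ℝ) := by nlinarith
      have h4 : t ≤ (n:ℝ)+1 := by rw [ht, div_le_iff₀ hd0]; linarith
      linarith
    have hS : ∑ m ∈ Icc 1 n, (m : ℝ) = (n:ℝ) * ((n:ℝ)+1) / 2 := sum_Icc_id_real n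
    have hub : ∑ m ∈ Icc 1 n, (m : ℝ) ≤ t^2/2 + t/2 := by
      rw [hS]; nlinarith [hnt, htn, ht0]
    have hlb : t^2/2 - t/2 ≤ ∑ m ∈ Icc 1 n, (m : ℝ) := by
      rw [hS]
      nlinarith [hnt, htn, ht0, Nat.cast_nonneg (α := ℝ) n]
    have hmu : |(μ d : ℝ)| ≤ 1 := by exact_mod_cast abs_moebius_le_one (n := d)
    have habs : |∑ m ∈ Icc 1 n, (m : ℝ) - t^2/2| ≤ t/2 := by
      rw [abs_le]; constructor <;> linarith
    have hmain : (μ d : ℝ) * ∑ m ∈ Icc 1 n, (m : ℝ)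
        = (μ d : ℝ) * (t^2/2) + (μ d : ℝ) * (∑ m ∈ Icc 1 n, (m : ℝ) - t^2/2) := by ring
    have hbd : (μ d : ℝ) * (∑ m ∈ Icc 1 n, (m : ℝ) - t^2/2) ≤ t/2 := by
      calc (μ d : ℝ) * (∑ m ∈ Icc 1 n, (m : ℝ) - t^2/2)
          ≤ |(μ d : ℝ) * (∑ m ∈ Icc 1 n, (m : ℝ) - t^2/2)| := le_abs_self _
        _ = |(μ d : ℝ)| * |∑ m ∈ Icc 1 n, (m : ℝ) - t^2/2| := abs_mul _ _
        _ ≤ 1 * (t/2) := by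
            apply mul_le_mul hmu habs (abs_nonneg _) zero_le_one
        _ = t/2 := one_mul _
    have heq2 : (μ d : ℝ) * (t^2/2) = (x:ℝ)^2/2 * ((μ d : ℝ) / (d:ℝ)^2) := by
      rw [ht]; field_simp
    have heq3 : t/2 = (x:ℝ)/(2*d) := by rw [ht, div_div, mul_comm]
    rw [hmain, heq2, ← heq3]
    linarith
  calc ∑ d ∈ Icc 1 x, (μ d : ℝ) * ∑ m ∈ Icc 1 (x / d), (m : ℝ)
      ≤ ∑ d ∈ Icc 1 x, ((x:ℝ)^2 / 2 * ((μ d : ℝ) / (d:ℝ)^2) + (x:ℝ) / (2 * d)) :=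
        Finset.sum_le_sum key
    _ = (x:ℝ)^2/2 * (∑ d ∈ Icc 1 x, (μ d : ℝ) / (d:ℝ)^2)
        + (x:ℝ)/2 * ∑ d ∈ Icc 1 x, 1/(d:ℝ) := by
        rw [Finset.sum_add_distrib, Finset.mul_sum, Finset.mul_sum]
        congr 1
        refine Finset.sum_congr rfl fun d _ => ?_
        field_simp
    _ ≤ (x:ℝ)^2/2 * (6 / Real.pi ^ 2 + 1 / x) + (x:ℝ)/2 * (Real.log x + 1) := by
        have h1 := partial_moebius_le x hx
        have h2 := harmonic_sum_le x (by omega)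
        have hxx : (0:ℝ) ≤ (x:ℝ)^2/2 := by positivity
        have hxx2 : (0:ℝ) ≤ (x:ℝ)/2 := by positivity
        have := mul_le_mul_of_nonneg_left h1 hxx
        have := mul_le_mul_of_nonneg_left h2 hxx2
        linarith
    _ ≤ _ := by
        have hpi : (0:ℝ) < Real.pi ^ 2 := by positivity
        have hlog : (0:ℝ) ≤ Real.log x := Real.log_nonneg (by linarith)
        have hx1 : (0:ℝ) < (x:ℝ) - 1 := by linarith
        have e1 : (x:ℝ)^2/2 * (6 / Real.pi ^ 2 + 1 / x)
            = 3 / Real.pi^2 * (x:ℝ)^2 + (x:ℝ)/2 := by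
          field_simp; ring
        rw [e1]
        have e2 : (0:ℝ) ≤ (x:ℝ)^2 / (2 * ((x:ℝ) - 1)) := by positivity
        nlinarith [hlog, hx2, e2]
end
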